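/- For fixed y with 0 < √λ·|y| < 1 appropriately, the function λ ↦ arctan(λ, y) = arctan(√λ y)/√λ (extended as y at λ = 0 and arctanh(√(-λ)y)/√(-λ) for λ < 0) is strictly decreasing in λ for y > 0; consequently |arctan(Ω, y)| > |y| when Ω < 0 and |arctan(Ω, y)| < |y| when Ω > 0. -/

import Mathlib

/-- The inverse hyperbolic tangent. -/
noncomputable def artanh (x : ℝ) : ℝ := (1/2) * Real.log ((1 + x) / (1 - x))

/-- The generalized arctangent: `arctan(λ,y) = arctan(√λ y)/√λ` for `λ > 0`, `y` for
`λ = 0`, and `arctanh(√(-λ) y)/√(-λ)` for `λ < 0` (requiring `√(-λ)|y| < 1`). -/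
noncomputable def arctanGen (lam y : ℝ) : ℝ :=
  if 0 < lam then Real.arctan (Real.sqrt lam * y) / Real.sqrt lam
  else if lam < 0 then artanh (Real.sqrt (-lam) * y) / Real.sqrt (-lam)
  else y

/-!
With `u = √|λ| y`, `arctanGen λ y = y · f(u)/u` where `f = arctan` for `λ > 0` and
`f = artanh` for `λ < 0`, and `f(u)/u` is the slope of the secant of `f` through `0`.
As `arctan` is strictly concave on `[0, ∞)` and `artanh` strictly convex on `[0, 1)`, both with
derivative `1` at `0`, this slope is `< 1` and decreasing in `u` for `arctan`, and `> 1` and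
increasing in `u` for `artanh`; since `u` grows with `|λ|`, `arctanGen λ y` decreases in `λ`
through its value `y` at `λ = 0`.
-/

open Set

lemma hasDerivAt_artanh {x : ℝ} (hx : x ∈ Ioo (-1 : ℝ) 1) :
    HasDerivAt artanh (1 - x ^ 2)⁻¹ x := by
  obtain ⟨h1, h2⟩ := hx
  have hd : HasDerivAt (fun t => (1 / 2) * (Real.log (1 + t) - Real.log (1 - t)))
      ((1 / 2) * ((1 + x)⁻¹ - -(1 - x)⁻¹)) x := by
    have hp := ((hasDerivAt_id x).const_add 1).log (by simp; linarith)
    have hm := ((hasDerivAt_id x).const_sub 1).log (by simp; linarith)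
    simpa [div_eq_mul_inv] using (hp.sub hm).const_mul (1 / 2 : ℝ)
  have hne : (1 : ℝ) - x ^ 2 ≠ 0 := by nlinarith
  have hxp : 1 + x ≠ 0 := by linarith
  have hxm : 1 - x ≠ 0 := by linarith
  have heq : (1 / 2) * ((1 + x)⁻¹ - -(1 - x)⁻¹) = (1 - x ^ 2)⁻¹ := by
    field_simp
    ring
  refine heq ▸ hd.congr_of_eventuallyEq ?_
  filter_upwards [Ioo_mem_nhds h1 h2] with t ht
  rw [artanh, Real.log_div (by linarith [ht.1]) (by linarith [ht.2])]

lemma strictConcaveOn_arctan : StrictConcaveOn ℝ (Ici 0) Real.arctan := by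
  refine StrictAntiOn.strictConcaveOn_of_deriv (convex_Ici 0) Real.continuous_arctan.continuousOn ?_
  rw [interior_Ici, Real.deriv_arctan]
  intro a ha b hb hab
  have : 0 < a := ha
  simp only
  gcongr

lemma strictConvexOn_artanh : StrictConvexOn ℝ (Ico 0 1) artanh := by
  refine StrictMonoOn.strictConvexOn_of_deriv (convex_Ico 0 1) ?_ ?_
  · exact fun x hx =>
      (hasDerivAt_artanh ⟨by linarith [hx.1], hx.2⟩).continuousAt.continuousWithinAt
  rw [interior_Ico]
  intro a ha b hb hab
  rw [(hasDerivAt_artanh ⟨by linarith [ha.1], ha.2⟩).deriv,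
    (hasDerivAt_artanh ⟨by linarith [hb.1], hb.2⟩).deriv]
  have : 0 < 1 - b ^ 2 := by nlinarith [hb.1, hb.2]
  have ha0 := ha.1
  gcongr

lemma strictAntiOn_arctan_div_self : StrictAntiOn (fun x => Real.arctan x / x) (Ioi 0) := by
  intro a ha b hb hab
  simpa using strictConcaveOn_arctan.secant_strict_mono (a := 0) self_mem_Ici
    (Ioi_subset_Ici_self ha) (Ioi_subset_Ici_self hb) ha.ne' hb.ne' hab

lemma strictMonoOn_artanh_div_self : StrictMonoOn (fun x => artanh x / x) (Ioo 0 1) := by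
  intro a ha b hb hab
  simpa [artanh] using strictConvexOn_artanh.secant_strict_mono (a := 0) (by simp)
    (Ioo_subset_Ico_self ha) (Ioo_subset_Ico_self hb) ha.1.ne' hb.1.ne' hab

lemma arctan_div_self_lt_one {x : ℝ} (hx : 0 < x) : Real.arctan x / x < 1 := by
  simpa [slope_def_field] using strictConcaveOn_arctan.slope_lt_of_hasDerivAt self_mem_Ici
    (Ioi_subset_Ici_self hx) hx (Real.hasDerivAt_arctan 0)

lemma one_lt_artanh_div_self {x : ℝ} (hx : x ∈ Ioo 0 1) : 1 < artanh x / x := by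
  simpa [slope_def_field, artanh] using strictConvexOn_artanh.lt_slope_of_hasDerivAt (by simp)
    (Ioo_subset_Ico_self hx) hx.1 (hasDerivAt_artanh (x := 0) (by norm_num))

section arctanGen

variable {lam y : ℝ}

lemma arctanGen_zero (y : ℝ) : arctanGen 0 y = y := by simp [arctanGen]

lemma arctanGen_of_pos (hlam : 0 < lam) (hy : y ≠ 0) :
    arctanGen lam y = y * (Real.arctan (√lam * y) / (√lam * y)) := by
  have : √lam ≠ 0 := (Real.sqrt_pos.2 hlam).ne'
  rw [arctanGen, if_pos hlam]
  field_simp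

lemma arctanGen_of_neg (hlam : lam < 0) (hy : y ≠ 0) :
    arctanGen lam y = y * (artanh (√(-lam) * y) / (√(-lam) * y)) := by
  have : √(-lam) ≠ 0 := (Real.sqrt_pos.2 (neg_pos.2 hlam)).ne'
  rw [arctanGen, if_neg hlam.not_gt, if_pos hlam]
  field_simp

lemma arctanGen_lt_self (hlam : 0 < lam) (hy : 0 < y) : arctanGen lam y < y := by
  rw [arctanGen_of_pos hlam hy.ne']
  exact mul_lt_of_lt_one_right hy (arctan_div_self_lt_one (by positivity))

lemma arctanGen_pos (hlam : 0 < lam) (hy : 0 < y) : 0 < arctanGen lam y := by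
  rw [arctanGen_of_pos hlam hy.ne']
  have : 0 < √lam * y := by positivity
  exact mul_pos hy (div_pos (Real.arctan_pos.2 this) this)

lemma self_lt_arctanGen (hlam : lam < 0) (hy : 0 < y) (hdom : √(-lam) * y < 1) :
    y < arctanGen lam y := by
  rw [arctanGen_of_neg hlam hy.ne']
  have : 0 < √(-lam) * y := mul_pos (Real.sqrt_pos.2 (neg_pos.2 hlam)) hy
  exact lt_mul_of_one_lt_right hy (one_lt_artanh_div_self ⟨this, hdom⟩)

lemma strictAntiOn_arctanGen_Ici (hy : 0 < y) :
    StrictAntiOn (fun lam => arctanGen lam y) (Ici 0) := by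
  intro a ha b hb hab
  have hb0 : 0 < b := ha.out.trans_lt hab
  rcases ha.out.eq_or_lt with rfl | ha0
  · simpa only [arctanGen_zero] using arctanGen_lt_self hb0 hy
  simp only [arctanGen_of_pos ha0 hy.ne', arctanGen_of_pos hb0 hy.ne']
  have hu : √a * y < √b * y := mul_lt_mul_of_pos_right (Real.sqrt_lt_sqrt ha0.le hab) hy
  exact mul_lt_mul_of_pos_left
    (strictAntiOn_arctan_div_self (mem_Ioi.2 (by positivity)) (mem_Ioi.2 (by positivity)) hu) hy

lemma strictAntiOn_arctanGen_nonpos (hy : 0 < y) :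
    StrictAntiOn (fun lam => arctanGen lam y) {lam | lam ≤ 0 ∧ √(-lam) * y < 1} := by
  rintro a ⟨ha, hadom⟩ b ⟨hb, hbdom⟩ hab
  have ha0 : a < 0 := hab.trans_le hb
  rcases hb.eq_or_lt with rfl | hb0
  · simpa only [arctanGen_zero] using self_lt_arctanGen ha0 hy hadom
  simp only [arctanGen_of_neg ha0 hy.ne', arctanGen_of_neg hb0 hy.ne']
  have hba : √(-b) * y < √(-a) * y :=
    mul_lt_mul_of_pos_right (Real.sqrt_lt_sqrt (by linarith) (by linarith)) hy
  refine mul_lt_mul_of_pos_left (strictMonoOn_artanh_div_self ⟨?_, hba.trans hadom⟩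
    ⟨?_, hadom⟩ hba) hy
  · exact mul_pos (Real.sqrt_pos.2 (neg_pos.2 hb0)) hy
  · exact mul_pos (Real.sqrt_pos.2 (neg_pos.2 ha0)) hy

end arctanGen

/-- For fixed `y > 0`, the function `λ ↦ arctan(λ, y)` is strictly decreasing on the set
where it is defined (i.e. where `√(-λ)·y < 1` when `λ < 0`); consequently
`|arctan(Ω, y)| > |y|` when `Ω < 0` and `|arctan(Ω, y)| < |y|` when `Ω > 0`. -/
theorem stmt10 (y : ℝ) (hy : 0 < y) :
    StrictAntiOn (fun lam => arctanGen lam y) {lam : ℝ | lam < 0 → Real.sqrt (-lam) * y < 1} ∧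
    (∀ lam : ℝ, lam < 0 → Real.sqrt (-lam) * y < 1 → |y| < |arctanGen lam y|) ∧
    (∀ lam : ℝ, 0 < lam → |arctanGen lam y| < |y|) := by
  refine ⟨?_, fun lam hlam hdom => ?_, fun lam hlam => ?_⟩
  · refine ((strictAntiOn_arctanGen_nonpos hy).union (strictAntiOn_arctanGen_Ici hy)
      ⟨⟨le_rfl, by simp⟩, fun _ h => h.1⟩ isLeast_Ici).mono fun lam hlam => ?_
    by_cases h : lam < 0
    exacts [Or.inl ⟨h.le, hlam h⟩, Or.inr (not_lt.1 h)]
  · have := self_lt_arctanGen hlam hy hdom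
    rwa [abs_of_pos hy, abs_of_pos (hy.trans this)]
  · rw [abs_of_pos hy, abs_of_pos (arctanGen_pos hlam hy)]
    exact arctanGen_lt_self hlam hy
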